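/- Let B be an n×n real symmetric positive semidefinite matrix whose τ×τ principal submatrices are all invertible, and let S₀ ∼ Vol_τ(B), i.e., Pr(S₀ = S) proportional to Det(B_{S×S}). Then E[I_{S₀} (B_{S₀×S₀})⁻¹ I_{S₀}ᵀ] = Q Diag(σ_{τ−1}(λ₋₁),...,σ_{τ−1}(λ₋ₙ)) Qᵀ / σ_τ(λ), where B = Q Diag(λ) Qᵀ is a spectral decomposition. -/

import Mathlib

open Matrix Finset

/-- The principal submatrix of `B` indexed by `S`. -/
def principalSub {n : ℕ} (B : Matrix (Fin n) (Fin n) ℝ) (S : Finset (Fin n)) :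
    Matrix (Fin S.card) (Fin S.card) ℝ :=
  B.submatrix (fun i => (S.orderIsoOfFin rfl i).1) (fun j => (S.orderIsoOfFin rfl j).1)

/-- `I_S`: the n×|S| matrix of the columns of the identity matrix indexed by `S`. -/
def colsId {n : ℕ} (S : Finset (Fin n)) : Matrix (Fin n) (Fin S.card) ℝ :=
  fun i j => if i = (S.orderIsoOfFin rfl j).1 then 1 else 0

/-! Both sides are coefficients of generating polynomials in `X`. Expanding the determinant
row by row gives `det (1 + X • B) = ∑_S X^|S| det B_S`, and since `det` is affine along the
rank-one direction `single j i`, with slope the `(i, j)` entry of the adjugate, the same expansion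
applied to `B + single j i 1` yields `adj (1 + X • B) = ∑_S X^(|S|-1) I_S adj (B_S) I_Sᵀ`.
On the other hand `1 + X • B = Q diag (1 + X λᵢ) Qᵀ` with `Q` orthogonal, so these polynomials
are `∏ᵢ (1 + X λᵢ)` and `Q diag (∏_{j ≠ i} (1 + X λⱼ)) Qᵀ`, whose coefficients are elementary
symmetric functions. Finally `det (B_S) • B_S⁻¹ = adj (B_S)`. -/

open Polynomial

theorem Polynomial.coeff_prod_one_add_X_mul_C {R ι : Type*} [CommSemiring R] (s : Finset ι)
    (r : ι → R) (k : ℕ) :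
    (∏ i ∈ s, (1 + X * C (r i))).coeff k = ∑ t ∈ s.powersetCard k, ∏ i ∈ t, r i := by
  have hterm : ∀ t : Finset ι, ∏ i ∈ t, X * C (r i) = C (∏ i ∈ t, r i) * X ^ t.card := by
    intro t
    rw [prod_mul_distrib, prod_const, ← map_prod, mul_comm]
  simp only [prod_one_add, hterm, finsetSum_coeff, coeff_C_mul_X_pow, powersetCard_eq_filter,
    sum_filter, eq_comm]

namespace Matrix

section

variable {n R : Type*} [Fintype n] [DecidableEq n] [CommRing R]

theorem det_add_single (M : Matrix n n R) (i j : n) (c : R) :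
    (M + single j i c).det = M.det + c * M.adjugate i j := by
  have hrow : M + single j i c = M.updateRow j (M j + c • Pi.single i 1) := by
    ext a b
    by_cases ha : a = j
    · subst ha
      by_cases hb : i = b <;> simp [hb]
    · simp [Ne.symm ha, ha]
  rw [hrow, det_updateRow_add, det_updateRow_smul, updateRow_eq_self, adjugate_apply]

theorem adjugate_conj_of_mul_transpose_eq_one {Q : Matrix n n R} (hQ : Q * Qᵀ = 1)
    (M : Matrix n n R) : adjugate (Q * M * Qᵀ) = Q * adjugate M * Qᵀ := by
  have hadj : adjugate Q = Q.det • Qᵀ := by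
    rw [← Matrix.mul_one (adjugate Q), ← hQ, ← Matrix.mul_assoc, adjugate_mul, smul_mul,
      Matrix.one_mul]
  have hdet : Q.det * Q.det = 1 := by
    simpa only [det_mul, det_transpose, det_one] using congrArg det hQ
  rw [adjugate_mul_distrib, adjugate_mul_distrib, ← adjugate_transpose, hadj, transpose_smul,
    transpose_transpose]
  simp only [Matrix.mul_smul, Matrix.smul_mul, smul_smul, hdet, one_smul, Matrix.mul_assoc]

end

section

variable {n R : Type*} [DecidableEq n] [CommRing R]

def extendByZero (s : Finset n) (N : Matrix s s R) : Matrix n n R :=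
  of fun a b => if h : a ∈ s ∧ b ∈ s then N ⟨a, h.1⟩ ⟨b, h.2⟩ else 0

theorem one_submatrix_val_mul_apply {p : Type*} (s : Finset n) (M : Matrix s p R) (a : n)
    (q : p) : ((1 : Matrix n n R).submatrix id (Subtype.val : s → n) * M) a q =
      if h : a ∈ s then M ⟨a, h⟩ q else 0 := by
  rw [mul_apply]
  split_ifs with h
  · rw [Fintype.sum_eq_single ⟨a, h⟩]
    · simp [one_apply]
    · intro c hc
      rw [submatrix_apply, id, one_apply_ne (fun hac => hc (Subtype.ext hac.symm)), zero_mul]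
  · refine Fintype.sum_eq_zero _ fun c => ?_
    rw [submatrix_apply, id, one_apply_ne (show a ≠ c from fun hac => h (hac ▸ c.2)), zero_mul]

theorem extendByZero_eq_mul (s : Finset n) (N : Matrix s s R) :
    extendByZero s N = (1 : Matrix n n R).submatrix id (Subtype.val : s → n) * N *
      ((1 : Matrix n n R).submatrix id (Subtype.val : s → n))ᵀ := by
  ext a b
  rw [Matrix.mul_assoc, ← transpose_transpose N, ← transpose_mul, one_submatrix_val_mul_apply,
    extendByZero, of_apply]
  by_cases ha : a ∈ s
  · simp only [ha, true_and, dif_pos, transpose_apply, one_submatrix_val_mul_apply]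
  · simp only [ha, false_and, dif_neg, not_false_eq_true]

theorem submatrix_single_val (s : Finset n) (i j : n) (c : R) :
    (single j i c).submatrix (Subtype.val : s → n) Subtype.val =
      if h : i ∈ s ∧ j ∈ s then single ⟨j, h.2⟩ ⟨i, h.1⟩ c else 0 := by
  ext a b
  split_ifs with h
  · simp [single_apply, Subtype.ext_iff]
  · simp only [submatrix_apply, single_apply, zero_apply]
    rw [if_neg]
    rintro ⟨rfl, rfl⟩
    exact h ⟨b.2, a.2⟩

theorem det_submatrix_add_single_sub (M : Matrix n n R) (s : Finset n) (i j : n) :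
    ((M + single j i 1).submatrix (Subtype.val : s → n) Subtype.val).det
      - (M.submatrix (Subtype.val : s → n) Subtype.val).det
      = extendByZero s (M.submatrix Subtype.val Subtype.val).adjugate i j := by
  rw [submatrix_add, Pi.add_apply, Pi.add_apply, submatrix_single_val, extendByZero, of_apply]
  split_ifs
  · rw [det_add_single, one_mul, add_sub_cancel_left]
  · rw [add_zero, sub_self]

end

variable {n R : Type*} [Fintype n] [DecidableEq n] [CommRing R]

theorem coeff_adjugate_one_add_X_smul (M : Matrix n n R) (i j : n) (k : ℕ) :
    (adjugate (1 + (X : R[X]) • M.map C) i j).coeff k =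
      ∑ s ∈ univ.powersetCard (k + 1),
        extendByZero s (M.submatrix Subtype.val Subtype.val).adjugate i j := by
  have hX : X * adjugate (1 + (X : R[X]) • M.map C) i j =
      det (1 + (X : R[X]) • (M + single j i 1).map C) - det (1 + (X : R[X]) • M.map C) := by
    rw [Matrix.map_add _ (map_add C), map_single, map_one, smul_add, smul_single, smul_eq_mul,
      mul_one, ← add_assoc, det_add_single, add_sub_cancel_left]
  rw [← coeff_X_mul, hX, coeff_sub, coeff_det_one_add_X_smul_eq_sum_minors,
    coeff_det_one_add_X_smul_eq_sum_minors, ← sum_sub_distrib]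
  exact sum_congr rfl fun s _ => det_submatrix_add_single_sub M s i j

theorem coeff_map_C_mul_mul_map_C {l m o : Type*} [Fintype m] [Fintype o]
    (A : Matrix l m R) (P : Matrix m o R[X]) (B : Matrix o l R) (a b : l) (k : ℕ) :
    ((A.map C * P * B.map C) a b).coeff k = (A * P.map (fun p => p.coeff k) * B) a b := by
  simp only [mul_apply, map_apply, finsetSum_coeff, coeff_mul_C, coeff_C_mul]

theorem map_C_mul_transpose_eq_one {Q : Matrix n n R} (hQ : Q * Qᵀ = 1) :
    Q.map C * (Q.map C)ᵀ = (1 : Matrix n n R[X]) := by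
  rw [← transpose_map, ← Matrix.map_mul, hQ, Matrix.map_one _ (map_zero C) (map_one C)]

theorem one_add_X_smul_map_conj {Q : Matrix n n R} (hQ : Q * Qᵀ = 1) (lam : n → R) :
    1 + (X : R[X]) • (Q * diagonal lam * Qᵀ).map C =
      Q.map C * diagonal (fun i => 1 + X * C (lam i)) * (Q.map C)ᵀ := by
  have hdiag : diagonal (fun i => 1 + X * C (lam i)) = 1 + (X : R[X]) • (diagonal lam).map C := by
    rw [diagonal_map (map_zero C), ← diagonal_smul, ← diagonal_one, diagonal_add]
    rfl
  rw [hdiag, Matrix.mul_add, Matrix.add_mul, Matrix.mul_one, map_C_mul_transpose_eq_one hQ,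
    Matrix.mul_smul, Matrix.smul_mul, Matrix.map_mul, Matrix.map_mul, transpose_map]

theorem sum_det_submatrix_conj {Q : Matrix n n R} (hQ : Q * Qᵀ = 1) (lam : n → R) (k : ℕ) :
    ∑ s ∈ univ.powersetCard k,
        ((Q * diagonal lam * Qᵀ).submatrix (Subtype.val : s → n) Subtype.val).det =
      ∑ t ∈ univ.powersetCard k, ∏ i ∈ t, lam i := by
  rw [← coeff_det_one_add_X_smul_eq_sum_minors, one_add_X_smul_map_conj hQ, det_mul, det_mul,
    mul_right_comm, ← det_mul, map_C_mul_transpose_eq_one hQ, det_one, one_mul, det_diagonal,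
    coeff_prod_one_add_X_mul_C]

theorem sum_extendByZero_adjugate_conj {Q : Matrix n n R} (hQ : Q * Qᵀ = 1) (lam : n → R)
    (k : ℕ) :
    ∑ s ∈ univ.powersetCard (k + 1), extendByZero s
        ((Q * diagonal lam * Qᵀ).submatrix (Subtype.val : s → n) Subtype.val).adjugate =
      Q * diagonal (fun i => ∑ t ∈ (univ.erase i).powersetCard k, ∏ j ∈ t, lam j) * Qᵀ := by
  ext a b
  rw [sum_apply, ← coeff_adjugate_one_add_X_smul, one_add_X_smul_map_conj hQ,
    adjugate_conj_of_mul_transpose_eq_one (map_C_mul_transpose_eq_one hQ), adjugate_diagonal,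
    ← transpose_map, coeff_map_C_mul_mul_map_C, diagonal_map (coeff_zero k)]
  simp only [coeff_prod_one_add_X_mul_C]

end Matrix

theorem principalSub_eq_submatrix {n : ℕ} (B : Matrix (Fin n) (Fin n) ℝ) (S : Finset (Fin n)) :
    principalSub B S = (B.submatrix (Subtype.val : S → Fin n) Subtype.val).submatrix
      (S.orderIsoOfFin rfl).toEquiv (S.orderIsoOfFin rfl).toEquiv := rfl

theorem det_principalSub {n : ℕ} (B : Matrix (Fin n) (Fin n) ℝ) (S : Finset (Fin n)) :
    (principalSub B S).det = (B.submatrix (Subtype.val : S → Fin n) Subtype.val).det := by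
  rw [principalSub_eq_submatrix, det_submatrix_equiv_self]

theorem colsId_mul_adjugate_principalSub_mul_transpose {n : ℕ} (B : Matrix (Fin n) (Fin n) ℝ)
    (S : Finset (Fin n)) :
    colsId S * (principalSub B S).adjugate * (colsId S)ᵀ =
      extendByZero S (B.submatrix (Subtype.val : S → Fin n) Subtype.val).adjugate := by
  have hcols : colsId S = ((1 : Matrix (Fin n) (Fin n) ℝ).submatrix id
      (Subtype.val : S → Fin n)).submatrix id (S.orderIsoOfFin rfl).toEquiv := rfl
  rw [principalSub_eq_submatrix, adjugate_submatrix_equiv_self, hcols, submatrix_mul_equiv,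
    transpose_submatrix, submatrix_mul_equiv, submatrix_id_id, extendByZero_eq_mul]

theorem expectation_volume_sampling_general (n τ : ℕ) (hτ1 : 1 ≤ τ)
    (B Q : Matrix (Fin n) (Fin n) ℝ) (lam : Fin n → ℝ)
    (hQ : Q * Qᵀ = 1)
    (hdecomp : B = Q * Matrix.diagonal lam * Qᵀ)
    (hinv : ∀ S ∈ Finset.univ.powersetCard τ, IsUnit (principalSub B S).det) :
    ∑ S ∈ Finset.univ.powersetCard τ,
        ((principalSub B S).det /
            (∑ S' ∈ Finset.univ.powersetCard τ, (principalSub B S').det)) •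
          (colsId S * (principalSub B S)⁻¹ * (colsId S)ᵀ)
      = (∑ S ∈ Finset.univ.powersetCard τ, ∏ j ∈ S, lam j)⁻¹ •
          (Q * Matrix.diagonal (fun i : Fin n =>
            ∑ T ∈ (Finset.univ.erase i).powersetCard (τ - 1), ∏ j ∈ T, lam j) * Qᵀ) := by
  obtain ⟨k, rfl⟩ : ∃ k, τ = k + 1 := ⟨τ - 1, by omega⟩
  have hweight : ∀ S ∈ univ.powersetCard (k + 1), ∀ E : ℝ,
      ((principalSub B S).det / E) • (colsId S * (principalSub B S)⁻¹ * (colsId S)ᵀ) =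
        E⁻¹ • extendByZero S (B.submatrix (Subtype.val : S → Fin n) Subtype.val).adjugate := by
    intro S hS E
    rw [Matrix.inv_def, Ring.inverse_eq_inv', Matrix.mul_smul, Matrix.smul_mul, smul_smul,
      colsId_mul_adjugate_principalSub_mul_transpose, div_mul_eq_mul_div,
      mul_inv_cancel₀ (hinv S hS).ne_zero, one_div]
  rw [sum_congr rfl fun S hS => hweight S hS _, ← smul_sum]
  simp only [det_principalSub, hdecomp, sum_det_submatrix_conj hQ,
    sum_extendByZero_adjugate_conj hQ, Nat.add_sub_cancel]

/-- for volume sampling S₀ ∼ Vol_τ(B) (probabilities proportional to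
Det(B_{S×S})), the expectation of I_{S₀}(B_{S₀×S₀})⁻¹I_{S₀}ᵀ equals
Q Diag(σ_{τ-1}(λ₋₁),…,σ_{τ-1}(λ₋ₙ)) Qᵀ / σ_τ(λ). -/
theorem expectation_volume_sampling (n τ : ℕ) (hτ1 : 1 ≤ τ) (hτn : τ ≤ n)
    (B Q : Matrix (Fin n) (Fin n) ℝ) (lam : Fin n → ℝ)
    (hpsd : B.PosSemidef) (hQ : Q * Qᵀ = 1)
    (hmono : ∀ i j : Fin n, i ≤ j → lam j ≤ lam i)
    (hdecomp : B = Q * Matrix.diagonal lam * Qᵀ)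
    (hinv : ∀ S ∈ Finset.univ.powersetCard τ, IsUnit (principalSub B S).det) :
    ∑ S ∈ Finset.univ.powersetCard τ,
        ((principalSub B S).det /
            (∑ S' ∈ Finset.univ.powersetCard τ, (principalSub B S').det)) •
          (colsId S * (principalSub B S)⁻¹ * (colsId S)ᵀ)
      = (∑ S ∈ Finset.univ.powersetCard τ, ∏ j ∈ S, lam j)⁻¹ •
          (Q * Matrix.diagonal (fun i : Fin n =>
            ∑ T ∈ (Finset.univ.erase i).powersetCard (τ - 1), ∏ j ∈ T, lam j) * Qᵀ) :=
  expectation_volume_sampling_general n τ hτ1 B Q lam hQ hdecomp hinv
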